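/- arXiv:1006.4527 — 2 statements merged into one kernel-verified Lean document; each statement's English description precedes it below -/
import Mathlib

section
/- On block-diagonal matrices the extended Lindblad generator reproduces the Lindblad rate generator: for all d×d complex matrices τ₁,…,τₙ one has 𝓛̃[ ∑_{j=1}^n τⱼ ⊗ Eⱼⱼ ] = ∑_{i=1}^n 𝒦ᵢ(τ₁,…,τₙ) ⊗ Eᵢᵢ. In particular the subspace of block-diagonal matrices is invariant under 𝓛̃, and for block-diagonal initial conditions the master equation d/dt η̃(t) = 𝓛̃[η̃(t)] is equivalent to the Lindblad rate equation d/dt ηᵢ(t) = 𝒦ᵢ(η₁(t),…,ηₙ(t)) for the diagonal blocks. -/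
/-!
A block-diagonal matrix is `blockDiagonal τ = ∑ⱼ τⱼ ⊗ Eⱼⱼ`. A jump operator `A ⊗ Eᵢⱼ` carries block `j`
to block `i`: `(A ⊗ Eᵢⱼ) (blockDiagonal τ) (A ⊗ Eᵢⱼ)* = (A τⱼ A*) ⊗ Eᵢᵢ`, while
`(A ⊗ Eᵢⱼ)* (A ⊗ Eᵢⱼ) = A*A ⊗ Eⱼⱼ` only touches block `j`. So each term of `𝓛̃` keeps block-diagonal
matrices block-diagonal, and collecting what lands in block `k` (gains from the jumps into `k`, losses
from the jumps out of `k`) gives `𝒦ₖ`.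
-/

open Matrix Kronecker

/-- The Lindblad rate generator
`𝒦ᵢ(τ₁,…,τₙ) = −i[Hⁱ,τᵢ] + ∑_{α∈A} ∑_k ( R^{ik}_α τ_k (R^{ik}_α)* − ½{(R^{ki}_α)* R^{ki}_α, τᵢ} )`. -/
noncomputable def Kgen {n d : ℕ} {A : Type*} [Fintype A]
    (H : Fin n → Matrix (Fin d) (Fin d) ℂ)
    (R : A → Fin n → Fin n → Matrix (Fin d) (Fin d) ℂ)
    (τ : Fin n → Matrix (Fin d) (Fin d) ℂ) (i : Fin n) :
    Matrix (Fin d) (Fin d) ℂ :=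
  -Complex.I • (H i * τ i - τ i * H i)
    + ∑ α : A, ∑ k : Fin n,
      (R α i k * τ k * (R α i k)ᴴ
        - (1/2 : ℂ) • ((R α k i)ᴴ * R α k i * τ i + τ i * ((R α k i)ᴴ * R α k i)))

/-- `H = ∑ᵢ Hⁱ ⊗ Eᵢᵢ` on `ℋ_S ⊗ ℂⁿ`. -/
noncomputable def Hbig {n d : ℕ} (H : Fin n → Matrix (Fin d) (Fin d) ℂ) :
    Matrix (Fin d × Fin n) (Fin d × Fin n) ℂ :=
  ∑ i : Fin n, H i ⊗ₖ Matrix.single i i (1 : ℂ)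

/-- `S^{ij}_α = R^{ij}_α ⊗ Eᵢⱼ`. -/
noncomputable def Sbig {n d : ℕ} {A : Type*}
    (R : A → Fin n → Fin n → Matrix (Fin d) (Fin d) ℂ) (α : A) (i j : Fin n) :
    Matrix (Fin d × Fin n) (Fin d × Fin n) ℂ :=
  R α i j ⊗ₖ Matrix.single i j (1 : ℂ)

/-- The extended Lindblad generator
`𝓛̃[τ] = −i[H,τ] + ∑_{α,i,j} ( S^{ij}_α τ (S^{ij}_α)* − ½{(S^{ij}_α)* S^{ij}_α, τ} )`. -/
noncomputable def Ltilde {n d : ℕ} {A : Type*} [Fintype A]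
    (H : Fin n → Matrix (Fin d) (Fin d) ℂ)
    (R : A → Fin n → Fin n → Matrix (Fin d) (Fin d) ℂ)
    (τ : Matrix (Fin d × Fin n) (Fin d × Fin n) ℂ) :
    Matrix (Fin d × Fin n) (Fin d × Fin n) ℂ :=
  -Complex.I • (Hbig H * τ - τ * Hbig H)
    + ∑ α : A, ∑ i : Fin n, ∑ j : Fin n,
      (Sbig R α i j * τ * (Sbig R α i j)ᴴ
        - (1/2 : ℂ) • ((Sbig R α i j)ᴴ * Sbig R α i j * τ + τ * ((Sbig R α i j)ᴴ * Sbig R α i j)))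

namespace Matrix

variable {ι m o α : Type*} [DecidableEq o]

theorem blockDiagonal_sum [AddCommMonoid α] (s : Finset ι) (f : ι → o → Matrix m m α) :
    blockDiagonal (∑ x ∈ s, f x) = ∑ x ∈ s, blockDiagonal (f x) :=
  map_sum (blockDiagonalAddMonoidHom m m o α) f s

theorem kronecker_single_self [Semiring α] (A : Matrix m m α) (j : o) :
    A ⊗ₖ single j j (1 : α) = blockDiagonal (Pi.single j A) := by
  rw [← diagonal_single, kronecker_diagonal]
  congr 1
  ext k : 1
  rcases eq_or_ne k j with rfl | hk <;> simp [*]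

theorem blockDiagonal_eq_sum_kronecker_single [Fintype o] [Semiring α] (τ : o → Matrix m m α) :
    blockDiagonal τ = ∑ j, τ j ⊗ₖ single j j (1 : α) := by
  simp_rw [kronecker_single_self, ← blockDiagonal_sum, Finset.univ_sum_single]

theorem eq_blockDiagonal_blockDiag [Zero α] {X : Matrix (m × o) (m × o) α}
    (hX : ∀ p q, p.2 ≠ q.2 → X p q = 0) : X = blockDiagonal X.blockDiag := by
  ext ⟨a, k⟩ ⟨b, l⟩
  rcases eq_or_ne k l with rfl | hkl
  · rw [blockDiagonal_apply_eq, blockDiag_apply]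
  · rw [hX _ _ hkl, blockDiagonal_apply_ne _ _ _ hkl]

theorem conjTranspose_kronecker_single [CommSemiring α] [StarRing α] (A : Matrix m m α) (i j : o) :
    (A ⊗ₖ single i j (1 : α))ᴴ = Aᴴ ⊗ₖ single j i 1 := by
  rw [conjTranspose_kronecker, conjTranspose_single, star_one]

section Mul

variable [Fintype m] [Fintype o] [CommSemiring α]

theorem kronecker_single_mul_kronecker_single (A B : Matrix m m α) (i j k l : o) :
    (A ⊗ₖ single i j (1 : α)) * (B ⊗ₖ single k l 1) =
      if j = k then (A * B) ⊗ₖ single i l 1 else 0 := by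
  rw [← mul_kronecker_mul]
  split_ifs with h
  · rw [h, single_mul_single_same, one_mul]
  · rw [single_mul_single_of_ne (h := h), kronecker_zero]

theorem kronecker_single_mul_blockDiagonal (A : Matrix m m α) (τ : o → Matrix m m α) (i j : o) :
    (A ⊗ₖ single i j (1 : α)) * blockDiagonal τ = (A * τ j) ⊗ₖ single i j 1 := by
  simp [blockDiagonal_eq_sum_kronecker_single, Finset.mul_sum, kronecker_single_mul_kronecker_single]

theorem blockDiagonal_mul_kronecker_single (A : Matrix m m α) (τ : o → Matrix m m α) (i j : o) :
    blockDiagonal τ * (A ⊗ₖ single i j (1 : α)) = (τ i * A) ⊗ₖ single i j 1 := by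
  simp [blockDiagonal_eq_sum_kronecker_single, Finset.sum_mul, kronecker_single_mul_kronecker_single]

end Mul

variable [Fintype m] [Fintype o] [CommRing α] [StarRing α]

theorem kronecker_single_dissipator_blockDiagonal (A : Matrix m m α) (τ : o → Matrix m m α) (i j : o) (c : α) :
    (A ⊗ₖ single i j (1 : α)) * blockDiagonal τ * (A ⊗ₖ single i j 1)ᴴ
      - c • ((A ⊗ₖ single i j 1)ᴴ * (A ⊗ₖ single i j 1) * blockDiagonal τ
        + blockDiagonal τ * ((A ⊗ₖ single i j 1)ᴴ * (A ⊗ₖ single i j 1)))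
      = blockDiagonal (Pi.single i (A * τ j * Aᴴ)
          - Pi.single j (c • (Aᴴ * A * τ j + τ j * (Aᴴ * A)))) := by
  have hAA : (A ⊗ₖ single i j (1 : α))ᴴ * (A ⊗ₖ single i j 1) = (Aᴴ * A) ⊗ₖ single j j 1 := by
    rw [conjTranspose_kronecker_single, kronecker_single_mul_kronecker_single, if_pos rfl]
  rw [hAA, kronecker_single_mul_blockDiagonal, kronecker_single_mul_blockDiagonal,
    blockDiagonal_mul_kronecker_single,
    conjTranspose_kronecker_single, kronecker_single_mul_kronecker_single, if_pos rfl,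
    kronecker_single_self, kronecker_single_self, kronecker_single_self, blockDiagonal_sub,
    Pi.single_smul, blockDiagonal_smul, Pi.single_add, blockDiagonal_add]

end Matrix

theorem Hbig_eq_blockDiagonal {n d : ℕ} (H : Fin n → Matrix (Fin d) (Fin d) ℂ) :
    Hbig H = blockDiagonal H := by
  rw [Hbig, blockDiagonal_eq_sum_kronecker_single]

theorem Ltilde_blockDiagonal_eq_blockDiagonal_Kgen {n d : ℕ} {A : Type*} [Fintype A]
    (H : Fin n → Matrix (Fin d) (Fin d) ℂ)
    (R : A → Fin n → Fin n → Matrix (Fin d) (Fin d) ℂ)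
    (τ : Fin n → Matrix (Fin d) (Fin d) ℂ) :
    Ltilde H R (blockDiagonal τ) = blockDiagonal (Kgen H R τ) := by
  rw [Ltilde, Hbig_eq_blockDiagonal, ← blockDiagonal_mul, ← blockDiagonal_mul,
    ← blockDiagonal_sub, ← blockDiagonal_smul]
  simp only [Sbig, kronecker_single_dissipator_blockDiagonal, ← blockDiagonal_sum, ← blockDiagonal_add]
  congr 1
  ext k : 1
  -- in block `k` the gain terms `Pi.single i` survive for `i = k`, the loss terms `Pi.single j` for `j = k`
  simp [Kgen, Finset.sum_apply, Pi.single_apply, Finset.sum_sub_distrib]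

theorem ltilde_blockDiagonal_general {n d : ℕ}
    {A : Type*} [Fintype A]
    (H : Fin n → Matrix (Fin d) (Fin d) ℂ)
    (R : A → Fin n → Fin n → Matrix (Fin d) (Fin d) ℂ) :
    (∀ τ : Fin n → Matrix (Fin d) (Fin d) ℂ,
      Ltilde H R (∑ j : Fin n, τ j ⊗ₖ Matrix.single j j (1 : ℂ))
        = ∑ i : Fin n, Kgen H R τ i ⊗ₖ Matrix.single i i (1 : ℂ)) ∧
    (∀ X : Matrix (Fin d × Fin n) (Fin d × Fin n) ℂ,
      (∀ p q, p.2 ≠ q.2 → X p q = 0) →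
      ∀ p q, p.2 ≠ q.2 → Ltilde H R X p q = 0) := by
  refine ⟨fun τ => ?_, fun X hX ⟨a, k⟩ ⟨b, l⟩ hkl => ?_⟩
  · rw [← blockDiagonal_eq_sum_kronecker_single, ← blockDiagonal_eq_sum_kronecker_single,
      Ltilde_blockDiagonal_eq_blockDiagonal_Kgen]
  · rw [eq_blockDiagonal_blockDiag hX, Ltilde_blockDiagonal_eq_blockDiagonal_Kgen,
      blockDiagonal_apply_ne _ _ _ hkl]

/-- On block-diagonal matrices the extended Lindblad generator reproduces the Lindblad rate
generator: `𝓛̃[∑ⱼ τⱼ ⊗ Eⱼⱼ] = ∑ᵢ 𝒦ᵢ(τ₁,…,τₙ) ⊗ Eᵢᵢ`; in particular the subspace of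
block-diagonal matrices is invariant under `𝓛̃`. -/
theorem ltilde_blockDiagonal {n d : ℕ} (hn : 1 ≤ n) (hd : 1 ≤ d)
    {A : Type*} [Fintype A]
    (H : Fin n → Matrix (Fin d) (Fin d) ℂ) (hH : ∀ i, (H i).IsHermitian)
    (R : A → Fin n → Fin n → Matrix (Fin d) (Fin d) ℂ) :
    (∀ τ : Fin n → Matrix (Fin d) (Fin d) ℂ,
      Ltilde H R (∑ j : Fin n, τ j ⊗ₖ Matrix.single j j (1 : ℂ))
        = ∑ i : Fin n, Kgen H R τ i ⊗ₖ Matrix.single i i (1 : ℂ)) ∧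
    (∀ X : Matrix (Fin d × Fin n) (Fin d × Fin n) ℂ,
      (∀ p q, p.2 ≠ q.2 → X p q = 0) →
      ∀ p q, p.2 ≠ q.2 → Ltilde H R X p q = 0) :=
  ltilde_blockDiagonal_general H R
end

section
/- The average equilibrium state of the two-level system equals η₁(∞) + η₂(∞) = pκ P₊ + (1 − pκ) P₋, i.e., p·z₁⁺ + (1−p)·z₂⁺ = pκ and p·z₁⁻ + (1−p)·z₂⁻ = 1 − pκ, where η₁(∞) = p(z₁⁺P₊ + z₁⁻P₋) and η₂(∞) = (1−p)(z₂⁺P₊ + z₂⁻P₋). -/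
open Matrix
open scoped ComplexOrder

noncomputable section TwoLevel

def σm : Matrix (Fin 2) (Fin 2) ℂ := !![0, 0; 1, 0]
def σp : Matrix (Fin 2) (Fin 2) ℂ := !![0, 1; 0, 0]
def σz : Matrix (Fin 2) (Fin 2) ℂ := !![1, 0; 0, -1]
def Pp : Matrix (Fin 2) (Fin 2) ℂ := !![1, 0; 0, 0]
def Pm : Matrix (Fin 2) (Fin 2) ℂ := !![0, 0; 0, 1]

/-- `𝒦₁` of the two-level model. -/
def K1 (γ₀ γ₁ γ₂ κ ω₁ : ℝ) (η₁ η₂ : Matrix (Fin 2) (Fin 2) ℂ) :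
    Matrix (Fin 2) (Fin 2) ℂ :=
  (γ₀ : ℂ) • (σm * η₁ * σp - (1/2 : ℂ) • (Pp * η₁ + η₁ * Pp))
    + (γ₂ : ℂ) • (σp * η₂ * σm)
    - ((γ₁ : ℂ)/2) • (Pp * η₁ + η₁ * Pp)
    - ((γ₀ : ℂ) * (κ : ℂ)) • η₁
    - (Complex.I * (ω₁ : ℂ) / 2) • (σz * η₁ - η₁ * σz)

/-- `𝒦₂` of the two-level model. -/
def K2 (γ₀ γ₁ γ₂ κ ω₂ : ℝ) (η₁ η₂ : Matrix (Fin 2) (Fin 2) ℂ) :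
    Matrix (Fin 2) (Fin 2) ℂ :=
  (γ₀ : ℂ) • (σm * η₂ * σp - (1/2 : ℂ) • (Pp * η₂ + η₂ * Pp))
    + (γ₁ : ℂ) • (σm * η₁ * σp)
    - ((γ₂ : ℂ)/2) • (Pm * η₂ + η₂ * Pm)
    + ((γ₀ : ℂ) * (κ : ℂ)) • η₁
    - (Complex.I * (ω₂ : ℂ) / 2) • (σz * η₂ - η₂ * σz)

/-- `κ₂ = γ₂κ/(γ₁+γ₀(1+κ))`. -/
def κ₂ (γ₀ γ₁ γ₂ κ : ℝ) : ℝ := γ₂ * κ / (γ₁ + γ₀ * (1 + κ))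

/-- `z₁⁺ = κ₁/(1+κ₁)` with `κ₁ = κ`. -/
def z1p (κ : ℝ) : ℝ := κ / (1 + κ)

/-- `z₂⁺ = κ₂/(1+κ₂)`. -/
def z2p (γ₀ γ₁ γ₂ κ : ℝ) : ℝ := κ₂ γ₀ γ₁ γ₂ κ / (1 + κ₂ γ₀ γ₁ γ₂ κ)

/-- `p = γ₂(1+κ)/(γ₂ + κ(γ₀+γ₁+γ₂) + κ²(γ₀+γ₂))`. -/
def peq (γ₀ γ₁ γ₂ κ : ℝ) : ℝ :=
  γ₂ * (1 + κ) / (γ₂ + κ * (γ₀ + γ₁ + γ₂) + κ ^ 2 * (γ₀ + γ₂))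

/-- `η₁(∞) = p(z₁⁺P₊ + z₁⁻P₋)`. -/
def η1eq (γ₀ γ₁ γ₂ κ : ℝ) : Matrix (Fin 2) (Fin 2) ℂ :=
  (peq γ₀ γ₁ γ₂ κ : ℂ) • ((z1p κ : ℂ) • Pp + ((1 - z1p κ : ℝ) : ℂ) • Pm)

/-- `η₂(∞) = (1−p)(z₂⁺P₊ + z₂⁻P₋)`. -/
def η2eq (γ₀ γ₁ γ₂ κ : ℝ) : Matrix (Fin 2) (Fin 2) ℂ :=
  ((1 - peq γ₀ γ₁ γ₂ κ : ℝ) : ℂ) •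
    ((z2p γ₀ γ₁ γ₂ κ : ℂ) • Pp + ((1 - z2p γ₀ γ₁ γ₂ κ : ℝ) : ℂ) • Pm)

end TwoLevel

/-! With `c = γ₁ + γ₀(1+κ)` and `D = γ₂ + κ(γ₀+γ₁+γ₂) + κ²(γ₀+γ₂)`, one has
`z₂⁺ = γ₂κ/(c + γ₂κ)` and `1 − p = κ(c + γ₂κ)/D`, so `(1 − p) z₂⁺ = γ₂κ²/D`; together with
`p z₁⁺ = γ₂κ/D` this gives `p z₁⁺ + (1 − p) z₂⁺ = γ₂κ(1+κ)/D = pκ`. The matrix identity is then the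
fact that mixing two convex combinations of `P₊` and `P₋` is again one. -/

theorem smul_convex_add_smul_convex {R M : Type*} [CommRing R] [AddCommGroup M] [Module R M]
    (p x y : R) (A B : M) :
    p • (x • A + (1 - x) • B) + (1 - p) • (y • A + (1 - y) • B)
      = (p * x + (1 - p) * y) • A + (1 - (p * x + (1 - p) * y)) • B := by
  module

section Coefficients

variable {γ₀ γ₁ γ₂ κ : ℝ}

theorem z2p_eq_div (hc : γ₁ + γ₀ * (1 + κ) ≠ 0) (hcκ : γ₁ + γ₀ * (1 + κ) + γ₂ * κ ≠ 0) :
    z2p γ₀ γ₁ γ₂ κ = γ₂ * κ / (γ₁ + γ₀ * (1 + κ) + γ₂ * κ) := by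
  unfold z2p κ₂
  field_simp

theorem one_sub_peq (hD : γ₂ + κ * (γ₀ + γ₁ + γ₂) + κ ^ 2 * (γ₀ + γ₂) ≠ 0) :
    1 - peq γ₀ γ₁ γ₂ κ
      = κ * (γ₁ + γ₀ * (1 + κ) + γ₂ * κ) / (γ₂ + κ * (γ₀ + γ₁ + γ₂) + κ ^ 2 * (γ₀ + γ₂)) := by
  unfold peq
  field_simp
  ring

theorem peq_mul_z1p (hκ : 1 + κ ≠ 0) :
    peq γ₀ γ₁ γ₂ κ * z1p κ = γ₂ * κ / (γ₂ + κ * (γ₀ + γ₁ + γ₂) + κ ^ 2 * (γ₀ + γ₂)) := by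
  unfold peq z1p
  field_simp

theorem one_sub_peq_mul_z2p (hc : γ₁ + γ₀ * (1 + κ) ≠ 0)
    (hcκ : γ₁ + γ₀ * (1 + κ) + γ₂ * κ ≠ 0)
    (hD : γ₂ + κ * (γ₀ + γ₁ + γ₂) + κ ^ 2 * (γ₀ + γ₂) ≠ 0) :
    (1 - peq γ₀ γ₁ γ₂ κ) * z2p γ₀ γ₁ γ₂ κ
      = γ₂ * κ ^ 2 / (γ₂ + κ * (γ₀ + γ₁ + γ₂) + κ ^ 2 * (γ₀ + γ₂)) := by
  rw [one_sub_peq hD, z2p_eq_div hc hcκ]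
  generalize γ₁ + γ₀ * (1 + κ) + γ₂ * κ = c at hcκ ⊢
  field_simp

theorem peq_mul_z1p_add_one_sub_peq_mul_z2p (hκ : 1 + κ ≠ 0)
    (hc : γ₁ + γ₀ * (1 + κ) ≠ 0) (hcκ : γ₁ + γ₀ * (1 + κ) + γ₂ * κ ≠ 0)
    (hD : γ₂ + κ * (γ₀ + γ₁ + γ₂) + κ ^ 2 * (γ₀ + γ₂) ≠ 0) :
    peq γ₀ γ₁ γ₂ κ * z1p κ + (1 - peq γ₀ γ₁ γ₂ κ) * z2p γ₀ γ₁ γ₂ κ = peq γ₀ γ₁ γ₂ κ * κ := by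
  rw [peq_mul_z1p hκ, one_sub_peq_mul_z2p hc hcκ hD]
  unfold peq
  field_simp

end Coefficients

/-- The average equilibrium state of the two-level system equals
`η₁(∞) + η₂(∞) = pκ P₊ + (1 − pκ) P₋`, i.e. `p z₁⁺ + (1−p) z₂⁺ = pκ` and
`p z₁⁻ + (1−p) z₂⁻ = 1 − pκ`. -/
theorem two_level_average_equilibrium (γ₀ γ₁ γ₂ κ : ℝ)
    (hγ₀ : 0 < γ₀) (hγ₁ : 0 < γ₁) (hγ₂ : 0 < γ₂) (hκ : 0 < κ) :
    η1eq γ₀ γ₁ γ₂ κ + η2eq γ₀ γ₁ γ₂ κ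
      = ((peq γ₀ γ₁ γ₂ κ * κ : ℝ) : ℂ) • Pp + ((1 - peq γ₀ γ₁ γ₂ κ * κ : ℝ) : ℂ) • Pm ∧
    peq γ₀ γ₁ γ₂ κ * z1p κ + (1 - peq γ₀ γ₁ γ₂ κ) * z2p γ₀ γ₁ γ₂ κ
      = peq γ₀ γ₁ γ₂ κ * κ ∧
    peq γ₀ γ₁ γ₂ κ * (1 - z1p κ) + (1 - peq γ₀ γ₁ γ₂ κ) * (1 - z2p γ₀ γ₁ γ₂ κ)
      = 1 - peq γ₀ γ₁ γ₂ κ * κ := by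
  have mix : peq γ₀ γ₁ γ₂ κ * z1p κ + (1 - peq γ₀ γ₁ γ₂ κ) * z2p γ₀ γ₁ γ₂ κ
      = peq γ₀ γ₁ γ₂ κ * κ :=
    peq_mul_z1p_add_one_sub_peq_mul_z2p (by positivity) (by positivity) (by positivity)
      (by positivity)
  refine ⟨?_, mix, by linarith⟩
  simp only [η1eq, η2eq, Complex.coe_smul]
  rw [smul_convex_add_smul_convex, mix]
end
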